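/- arXiv:1803.10058 — 4 statements merged into one kernel-verified Lean document; each statement's English description precedes it below -/
import Mathlib

section
/- Under the fractional linear transformation X = (αx+β)/(γx+δ) with αδ - βγ = 1, the piecewise linear hat function φ_k with nodes x_{k-1} < x_k < x_{k+1} transforms as Φ_k(X) = φ_k(x) · (γx_k+δ)/(γx+δ), where Φ_k is the hat function with nodes X_{k-1}, X_k, X_{k+1} and X_j = (αx_j+β)/(γx_j+δ). -/
/-- The piecewise linear hat function with nodes `a < b < c`. -/
noncomputable def hat (a b c : ℝ) : ℝ → ℝ := fun x =>
  if x ∈ Set.Icc a b then (x - a) / (b - a)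
  else if x ∈ Set.Icc b c then (c - x) / (c - b)
  else 0

private lemma frac_le_frac (α β γ δ u v : ℝ) (hdet : α * δ - β * γ = 1)
    (hu : 0 < γ * u + δ) (hv : 0 < γ * v + δ) :
    (α * u + β) / (γ * u + δ) ≤ (α * v + β) / (γ * v + δ) ↔ u ≤ v := by
  rw [div_le_div_iff₀ hu hv]
  constructor <;> intro h <;> nlinarith

private lemma frac_sub_frac (α β γ δ u v : ℝ) (hdet : α * δ - β * γ = 1)
    (hu : 0 < γ * u + δ) (hv : 0 < γ * v + δ) :
    (α * u + β) / (γ * u + δ) - (α * v + β) / (γ * v + δ)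
      = (u - v) / ((γ * u + δ) * (γ * v + δ)) := by
  rw [div_sub_div _ _ hu.ne' hv.ne']
  congr 1
  linear_combination (u - v) * hdet

/-- Under the fractional linear transformation `X = (αx+β)/(γx+δ)` with `αδ - βγ = 1`,
the hat function transforms as `Φ_k(X) = φ_k(x) ⬝ (γ x_k + δ)/(γ x + δ)`. -/
theorem hat_fractional_linear_transform
    (α β γ δ a b c : ℝ) (hdet : α * δ - β * γ = 1)
    (hab : a < b) (hbc : b < c)
    (hpos : ∀ y ∈ Set.Icc a c, 0 < γ * y + δ) :
    ∀ x ∈ Set.Icc a c,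
      hat ((α * a + β) / (γ * a + δ)) ((α * b + β) / (γ * b + δ))
          ((α * c + β) / (γ * c + δ)) ((α * x + β) / (γ * x + δ))
        = hat a b c x * ((γ * b + δ) / (γ * x + δ)) := by
  intro x hx
  have hac : a ≤ c := (hab.trans hbc).le
  have ha := hpos a ⟨le_refl a, hac⟩
  have hb := hpos b ⟨hab.le, hbc.le⟩
  have hc := hpos c ⟨hac, le_refl c⟩
  have hxp := hpos x hx
  have hAB : ∀ u v : ℝ, 0 < γ * u + δ → 0 < γ * v + δ →
      ((α * u + β) / (γ * u + δ) ≤ (α * v + β) / (γ * v + δ) ↔ u ≤ v) :=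
    fun u v h1 h2 => frac_le_frac α β γ δ u v hdet h1 h2
  unfold hat
  by_cases h1 : x ∈ Set.Icc a b
  · have hX : (α * x + β) / (γ * x + δ) ∈ Set.Icc ((α * a + β) / (γ * a + δ))
        ((α * b + β) / (γ * b + δ)) :=
      ⟨(hAB a x ha hxp).mpr h1.1, (hAB x b hxp hb).mpr h1.2⟩
    rw [if_pos hX, if_pos h1]
    rw [frac_sub_frac α β γ δ x a hdet hxp ha, frac_sub_frac α β γ δ b a hdet hb ha]
    rw [div_div_div_eq]
    have hba : b - a ≠ 0 := sub_ne_zero.mpr hab.ne'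
    field_simp
    rw [mul_comm (a * γ + δ)]; exact mul_div_mul_right _ _ (by rw [mul_comm a]; exact ha.ne')
  · have hx2 : x ∈ Set.Icc b c := ⟨le_of_not_ge fun h => h1 ⟨hx.1, h⟩, hx.2⟩
    have hX1 : ¬ (α * x + β) / (γ * x + δ) ∈ Set.Icc ((α * a + β) / (γ * a + δ))
        ((α * b + β) / (γ * b + δ)) := by
      intro h
      exact h1 ⟨hx.1, (hAB x b hxp hb).mp h.2⟩
    have hX2 : (α * x + β) / (γ * x + δ) ∈ Set.Icc ((α * b + β) / (γ * b + δ))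
        ((α * c + β) / (γ * c + δ)) :=
      ⟨(hAB b x hb hxp).mpr hx2.1, (hAB x c hxp hc).mpr hx2.2⟩
    rw [if_neg hX1, if_pos hX2, if_neg h1, if_pos hx2]
    rw [frac_sub_frac α β γ δ c x hdet hc hxp, frac_sub_frac α β γ δ c b hdet hc hb]
    rw [div_div_div_eq]
    have hcb : c - b ≠ 0 := sub_ne_zero.mpr hbc.ne'
    field_simp
    rw [mul_comm (c * γ + δ)]; exact mul_div_mul_right _ _ (by rw [mul_comm c]; exact hc.ne')
end

section
/- The map ℝ² \ {u = 0} → SL(2,ℝ) defined on the discrete jet z = (x_{k-1},u_{k-1},x_k,u_k,x_{k+1},u_{k+1}) (with u_k ≠ 0 and (x_k - x̄_k)u_x^k + ū_k ≠ 0) by α = 1/u_k, β = -x_k/u_k, γ = u_k u_x^k / ((x_k - x̄_k)u_x^k + ū_k), δ = u_k(ū_k - x̄_k u_x^k)/((x_k - x̄_k)u_x^k + ū_k) satisfies the normalization equations: (αx_k+β)/(γx_k+δ) = 0, u_k/(γx_k+δ) = 1, and γ(x̄_k u_x^k - ū_k) + δ u_x^k = 0, and moreover αδ - βγ = 1. 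-/
/-- The discrete moving frame for the `SL(2,ℝ)` action `X = (αx+β)/(γx+δ)`,
`U = u/(γx+δ)` determined by the cross-section `{X_k = 0, U_k = 1, U_X^k = 0}`
satisfies the normalization equations and `αδ - βγ = 1`. -/
theorem moving_frame_normalization
    (xm xk xp um uk up : ℝ) (h1 : xm < xk) (h2 : xk < xp) (huk : uk ≠ 0)
    (ux xbar ubar : ℝ)
    (hux : ux = (up - um) / (xp - xm))
    (hxbar : xbar = (xp + xm) / 2) (hubar : ubar = (up + um) / 2)
    (hD : (xk - xbar) * ux + ubar ≠ 0)
    (α β γ δ : ℝ)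
    (hα : α = 1 / uk) (hβ : β = -xk / uk)
    (hγ : γ = uk * ux / ((xk - xbar) * ux + ubar))
    (hδ : δ = uk * (ubar - xbar * ux) / ((xk - xbar) * ux + ubar)) :
    (α * xk + β) / (γ * xk + δ) = 0 ∧
    uk / (γ * xk + δ) = 1 ∧
    γ * (xbar * ux - ubar) + δ * ux = 0 ∧
    α * δ - β * γ = 1 := by
  have hden : γ * xk + δ = uk := by
    rw [hγ, hδ, div_mul_eq_mul_div, ← add_div, div_eq_iff hD]; ring
  refine ⟨?_, ?_, ?_, ?_⟩
  · rw [hα, hβ]; field_simp; ring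
  · rw [hden]; field_simp
  · rw [hγ, hδ]; field_simp; ring
  · have hD' : ubar - xbar * ux + ux * xk ≠ 0 := by intro h; apply hD; linarith
    rw [hα, hβ, hγ, hδ]; field_simp; rw [div_eq_iff (by intro h; apply hD; linarith)]; ring
end

section
/- The invariantization I(u_ℓ) = u_ℓ[(x_k - x̄_k)u_x^k + ū_k] / (u_k[(x_ℓ - x̄_k)u_x^k + ū_k]) is invariant under the simultaneous transformation x_j ↦ (αx_j+β)/(γx_j+δ), u_j ↦ u_j/(γx_j+δ) for all j ∈ {k-1, k, k+1, ℓ}, with αδ - βγ = 1. -/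
lemma moebius_diff (α β γ δ x y : ℝ) (hdet : α * δ - β * γ = 1)
    (hx : γ * x + δ ≠ 0) (hy : γ * y + δ ≠ 0) :
    (α * x + β) / (γ * x + δ) - (α * y + β) / (γ * y + δ)
      = (x - y) / ((γ * x + δ) * (γ * y + δ)) := by
  rw [div_sub_div _ _ hx hy]
  congr 1
  linear_combination (x - y) * hdet

lemma keyD (α β γ δ xm um xp up xj : ℝ) (hdet : α * δ - β * γ = 1)
    (hm : γ * xm + δ ≠ 0) (hp : γ * xp + δ ≠ 0) (hj : γ * xj + δ ≠ 0)
    (hpm : xp - xm ≠ 0) :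
    ((α * xj + β) / (γ * xj + δ) -
        ((α * xp + β) / (γ * xp + δ) + (α * xm + β) / (γ * xm + δ)) / 2) *
      ((up / (γ * xp + δ) - um / (γ * xm + δ)) /
        ((α * xp + β) / (γ * xp + δ) - (α * xm + β) / (γ * xm + δ))) +
      (up / (γ * xp + δ) + um / (γ * xm + δ)) / 2
    = ((xj - (xp + xm) / 2) * ((up - um) / (xp - xm)) + (up + um) / 2) /
        (γ * xj + δ) := by
  have hmid : (α * xj + β) / (γ * xj + δ) -
      ((α * xp + β) / (γ * xp + δ) + (α * xm + β) / (γ * xm + δ)) / 2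
      = ((xj - xp) / ((γ * xj + δ) * (γ * xp + δ))
        + (xj - xm) / ((γ * xj + δ) * (γ * xm + δ))) / 2 := by
    rw [show (α * xj + β) / (γ * xj + δ) -
        ((α * xp + β) / (γ * xp + δ) + (α * xm + β) / (γ * xm + δ)) / 2
      = (((α * xj + β) / (γ * xj + δ) - (α * xp + β) / (γ * xp + δ)) +
         ((α * xj + β) / (γ * xj + δ) - (α * xm + β) / (γ * xm + δ))) / 2 by ring,
      moebius_diff α β γ δ xj xp hdet hj hp, moebius_diff α β γ δ xj xm hdet hj hm]
  rw [hmid, moebius_diff α β γ δ xp xm hdet hp hm]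
  have hm' : xm * γ + δ ≠ 0 := by rwa [mul_comm]
  have hp' : xp * γ + δ ≠ 0 := by rwa [mul_comm]
  have hj' : xj * γ + δ ≠ 0 := by rwa [mul_comm]
  field_simp
  ring

/-- The invariantization `ι(u_ℓ)` built from the discrete jet `(x_{k±1}, u_{k±1}, x_k, u_k)`
and the point `(x_ℓ, u_ℓ)`. -/
noncomputable def iotaU (xm um xk uk xp up xl ul : ℝ) : ℝ :=
  ul * ((xk - (xp + xm) / 2) * ((up - um) / (xp - xm)) + (up + um) / 2) /
    (uk * ((xl - (xp + xm) / 2) * ((up - um) / (xp - xm)) + (up + um) / 2))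

/-- `ι(u_ℓ)` is invariant under the simultaneous transformation
`x_j ↦ (α x_j + β)/(γ x_j + δ)`, `u_j ↦ u_j/(γ x_j + δ)` with `αδ - βγ = 1`. -/
theorem iotaU_invariant
    (α β γ δ xm um xk uk xp up xl ul : ℝ) (hdet : α * δ - β * γ = 1)
    (hm : γ * xm + δ ≠ 0) (hk : γ * xk + δ ≠ 0) (hp : γ * xp + δ ≠ 0)
    (hl : γ * xl + δ ≠ 0)
    (hpm : xp - xm ≠ 0)
    (hPM : (α * xp + β) / (γ * xp + δ) - (α * xm + β) / (γ * xm + δ) ≠ 0)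
    (huk : uk ≠ 0)
    (hden : (xl - (xp + xm) / 2) * ((up - um) / (xp - xm)) + (up + um) / 2 ≠ 0)
    (hDen :
      ((α * xl + β) / (γ * xl + δ) -
            ((α * xp + β) / (γ * xp + δ) + (α * xm + β) / (γ * xm + δ)) / 2) *
          ((up / (γ * xp + δ) - um / (γ * xm + δ)) /
            ((α * xp + β) / (γ * xp + δ) - (α * xm + β) / (γ * xm + δ))) +
        (up / (γ * xp + δ) + um / (γ * xm + δ)) / 2 ≠ 0) :
    iotaU ((α * xm + β) / (γ * xm + δ)) (um / (γ * xm + δ))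
        ((α * xk + β) / (γ * xk + δ)) (uk / (γ * xk + δ))
        ((α * xp + β) / (γ * xp + δ)) (up / (γ * xp + δ))
        ((α * xl + β) / (γ * xl + δ)) (ul / (γ * xl + δ))
      = iotaU xm um xk uk xp up xl ul := by
  unfold iotaU
  rw [keyD α β γ δ xm um xp up xk hdet hm hp hk hpm,
      keyD α β γ δ xm um xp up xl hdet hm hp hl hpm]
  set Dk := (xk - (xp + xm) / 2) * ((up - um) / (xp - xm)) + (up + um) / 2 with hDk
  set Dl := (xl - (xp + xm) / 2) * ((up - um) / (xp - xm)) + (up + um) / 2 with hDl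
  have hcl := hl
  have hck := hk
  field_simp
end

section
/- For the ODE u_xx = exp(-u_x) with symmetry X = e^ε x + a, U = e^ε u + ε e^ε x + b, the discrete weak form ∫[u_x^d φ_k' + exp(-u_x^d) φ_k] dx = 0 is invariant: substituting U_X^d = u_x^d + ε, Φ_k = φ_k, Φ_k' = e^{-ε} φ_k', ω = e^ε dx into ∫[U_X^d Φ_k' + exp(-U_X^d) Φ_k] ω yields ∫[u_x^d φ_k' + exp(-u_x^d) φ_k] dx + ε ∫ φ_k' dx, and ∫_{-∞}^{∞} φ_k' dx = 0, so the transformed expression equals the original. -/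
open MeasureTheory

/-- Its a.e. derivative. -/
noncomputable def hatD (a b c : ℝ) : ℝ → ℝ := fun x =>
  if x ∈ Set.Ioo a b then 1 / (b - a)
  else if x ∈ Set.Ioo b c then -(1 / (c - b))
  else 0

lemma hatD_eq (a b c : ℝ) (hab : a < b) :
    hatD a b c = (Set.Ioo a b).indicator (fun _ => 1 / (b - a)) +
      (Set.Ioo b c).indicator (fun _ => -(1 / (c - b))) := by
  funext x
  simp only [hatD, Pi.add_apply, Set.indicator_apply]
  by_cases h1 : x ∈ Set.Ioo a b
  · have h2 : x ∉ Set.Ioo b c := fun h => absurd h1.2 (not_lt.2 h.1.le)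
    simp [h1, h2]
  · simp [h1]

lemma integral_hatD (a b c : ℝ) (hab : a < b) (hbc : b < c) :
    ∫ x, hatD a b c x = 0 := by
  have h1 : IntegrableOn (fun _ : ℝ => 1 / (b - a)) (Set.Ioo a b) :=
    integrableOn_const measure_Ioo_lt_top.ne
  have h2 : IntegrableOn (fun _ : ℝ => -(1 / (c - b))) (Set.Ioo b c) :=
    integrableOn_const measure_Ioo_lt_top.ne
  rw [hatD_eq a b c hab]
  simp only [Pi.add_apply]
  rw [integral_add (h1.integrable_indicator measurableSet_Ioo)
    (h2.integrable_indicator measurableSet_Ioo)]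
  rw [integral_indicator measurableSet_Ioo, integral_indicator measurableSet_Ioo]
  simp only [MeasureTheory.integral_const, smul_eq_mul, measureReal_def, Measure.restrict_apply_univ, Real.volume_Ioo]
  rw [ENNReal.toReal_ofReal (by linarith), ENNReal.toReal_ofReal (by linarith)]
  have hba : b - a ≠ 0 := by linarith
  have hcb : c - b ≠ 0 := by linarith
  field_simp
  norm_num

/-- For the ODE `u_xx = exp(-u_x)`, the discrete weak form is invariant under the
symmetry group: substituting `U_X^d = u_x^d + ε`, `Φ_k = φ_k`, `Φ_k' = e^{-ε} φ_k'`,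
`ω = e^ε dx` into the transformed weak form yields the original weak form. -/
theorem exp_ode_weak_form_invariant
    (a b c ε : ℝ) (hab : a < b) (hbc : b < c)
    (w : ℝ → ℝ) (hw : Measurable w) (hwb : ∃ M, ∀ x, |w x| ≤ M)
    (hint : Integrable fun x => w x * hatD a b c x + Real.exp (-w x) * hat a b c x)
    (hintD : Integrable (hatD a b c)) :
    (∫ x, ((w x + ε) * (Real.exp (-ε) * hatD a b c x) +
        Real.exp (-(w x + ε)) * hat a b c x) * Real.exp ε)
      = ∫ x, (w x * hatD a b c x + Real.exp (-w x) * hat a b c x) := by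
  have key : ∀ x, ((w x + ε) * (Real.exp (-ε) * hatD a b c x) +
      Real.exp (-(w x + ε)) * hat a b c x) * Real.exp ε
      = (w x * hatD a b c x + Real.exp (-w x) * hat a b c x) + ε * hatD a b c x := by
    intro x
    have h : Real.exp (-ε) * Real.exp ε = 1 := by
      rw [← Real.exp_add]; simp
    have h2 : Real.exp (-(w x + ε)) = Real.exp (-w x) * Real.exp (-ε) := by
      rw [← Real.exp_add]; ring_nf
    rw [h2]
    linear_combination ((w x + ε) * hatD a b c x + Real.exp (-w x) * hat a b c x) * h
  simp_rw [key]
  rw [integral_add hint (hintD.const_mul ε), integral_const_mul,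
    integral_hatD a b c hab hbc]
  ring
end
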